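/- Let D : Fin 3 → Fin 3 → Fin 3 → ℝ be the 3×3×3 tensor whose frontal slices (rows indexed by i, columns by j, slice index k, all 1-based) are: for k = 1 the matrix (1/2)·[[0,1,1],[1,1,0],[1,0,1]]; for k = 2 the matrix (1/2)·[[1,1,0],[0,1,1],[1,0,1]]; for k = 3 the matrix (1/2)·[[1,0,1],[1,0,1],[0,2,0]]. Then D is line-stochastic, Per(D) = 0, and D does not belong to the convex hull, in the real vector space of functions Fin 3 → Fin 3 → Fin 3 → ℝ, of the set of 3×3×3 line-permutation tensors. -/

import Mathlib

/-- A family `π : Fin n → Equiv.Perm (Fin n)` is discordant if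
`π k i ≠ π l i` for all `k ≠ l` and all `i`. -/
def Discordant {n : ℕ} (π : Fin n → Equiv.Perm (Fin n)) : Prop :=
  ∀ k l, k ≠ l → ∀ i, π k i ≠ π l i

instance {n : ℕ} : DecidablePred (Discordant (n := n)) := fun _ =>
  inferInstanceAs (Decidable (∀ _ _, _ → ∀ _, _))

/-- The 2-permanent of an `n × n × n` tensor. -/
noncomputable def Per2 {n : ℕ} (A : Fin n → Fin n → Fin n → ℝ) : ℝ :=
  ∑ π ∈ Finset.univ.filter (fun π : Fin n → Equiv.Perm (Fin n) => Discordant π),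
    ∏ k : Fin n, ∏ i : Fin n, A i (π k i) k

/-- An `n × n × n` tensor is line-stochastic if all its entries are nonnegative
and all its line sums equal 1. -/
def LineStochastic {n : ℕ} (A : Fin n → Fin n → Fin n → ℝ) : Prop :=
  (∀ i j k, 0 ≤ A i j k) ∧
  (∀ j k, ∑ i, A i j k = 1) ∧
  (∀ i k, ∑ j, A i j k = 1) ∧
  (∀ i j, ∑ k, A i j k = 1)

/-- A line-permutation tensor is a line-stochastic tensor with (0,1)-entries. -/
def LinePermutationTensor {n : ℕ} (A : Fin n → Fin n → Fin n → ℝ) : Prop :=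
  LineStochastic A ∧ ∀ i j k, A i j k = 0 ∨ A i j k = 1

/-- The `3 × 3 × 3` tensor `D` given by its three frontal slices
(rows indexed by `i`, columns by `j`, slice index `k`). -/
noncomputable def D : Fin 3 → Fin 3 → Fin 3 → ℝ := fun i j k =>
  (1 / 2) *
    (![!![0, 1, 1; 1, 1, 0; 1, 0, 1],
       !![1, 1, 0; 0, 1, 1; 1, 0, 1],
       !![1, 0, 1; 1, 0, 1; 0, 2, 0]] k) i j

/-!
The zero pattern of `D` forbids every Latin square: in slice `k = 0` the zeros sit at `j = -i`
and in slice `k = 1` at `j = i - 1` (arithmetic in `Fin 3`), and no two discordant permutations of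
`Fin 3` avoid these two permutations respectively. Reading a line-permutation tensor as a discordant
family of permutations (its slices are permutation matrices), this kills every term of `Per2 D`
and shows that no line-permutation tensor is supported inside the support of `D`, whereas a point
of the convex hull of nonnegative tensors contains the support of some generator in its own.
-/

open Finset

theorem existsUnique_eq_one_of_sum_eq_one {ι : Type*} [Fintype ι] {v : ι → ℝ}
    (h01 : ∀ a, v a = 0 ∨ v a = 1) (hsum : ∑ a, v a = 1) : ∃! a, v a = 1 := by
  have hnonneg : ∀ a, 0 ≤ v a := fun a => by rcases h01 a with h | h <;> simp [h]
  obtain ⟨a, ha⟩ : ∃ a, v a = 1 := by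
    by_contra! h
    have : ∑ a, v a = 0 := sum_eq_zero fun a _ => (h01 a).resolve_right (h a)
    linarith
  refine ⟨a, ha, fun b hb => ?_⟩
  by_contra hba
  have : v b + v a ≤ ∑ c, v c := by
    classical
    rw [← sum_pair hba]
    exact sum_le_univ_sum_of_nonneg hnonneg
  linarith

theorem LinePermutationTensor.exists_discordant_eq_one {n : ℕ} {P : Fin n → Fin n → Fin n → ℝ}
    (hP : LinePermutationTensor P) :
    ∃ π : Fin n → Equiv.Perm (Fin n), Discordant π ∧ ∀ k i, P i (π k i) k = 1 := by
  obtain ⟨⟨_, hcol, hrow, htube⟩, h01⟩ := hP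
  have hunique := @existsUnique_eq_one_of_sum_eq_one (Fin n) _
  choose f hf using fun k i => (hunique (fun j => h01 i j k) (hrow i k)).exists
  have hinj k : Function.Injective (f k) := fun i i' h =>
    (hunique (fun i => h01 i (f k i') k) (hcol (f k i') k)).unique (h ▸ hf k i) (hf k i')
  refine ⟨fun k => Equiv.ofBijective (f k) (Finite.injective_iff_bijective.mp (hinj k)),
    fun k l hne i h => hne ?_, hf⟩
  have hfkl : f k i = f l i := h
  exact (hunique (fun k => h01 i (f l i) k) (htube i (f l i))).unique (hfkl ▸ hf k i) (hf l i)

theorem Per2_eq_zero_of_forall_discordant {n : ℕ} {A : Fin n → Fin n → Fin n → ℝ}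
    (hA : ∀ π, Discordant π → ∃ k i, A i (π k i) k = 0) : Per2 A = 0 := by
  refine sum_eq_zero fun π hπ => ?_
  obtain ⟨k, i, hki⟩ := hA π (mem_filter.mp hπ).2
  exact prod_eq_zero (mem_univ k) (prod_eq_zero (mem_univ i) hki)

theorem exists_mem_support_subset_of_mem_convexHull {n : ℕ}
    {s : Set (Fin n → Fin n → Fin n → ℝ)} (hs : ∀ B ∈ s, ∀ i j k, 0 ≤ B i j k)
    {A : Fin n → Fin n → Fin n → ℝ} (hA : A ∈ convexHull ℝ s) :
    ∃ B ∈ s, ∀ i j k, A i j k = 0 → B i j k = 0 := by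
  by_contra! h
  -- the mass a tensor puts on the zeros of `A` is linear, positive on `s` and zero at `A`
  let φ : (Fin n → Fin n → Fin n → ℝ) → ℝ := fun B =>
    ∑ x : Fin n × Fin n × Fin n, if A x.1 x.2.1 x.2.2 = 0 then B x.1 x.2.1 x.2.2 else 0
  have hφ : IsLinearMap ℝ φ := by
    constructor <;> intros <;> simp only [φ, Pi.add_apply, Pi.smul_apply, smul_eq_mul, mul_sum] <;>
      simp only [← sum_add_distrib, apply_ite₂ (· + ·), mul_ite, add_zero, mul_zero]
  have hpos : s ⊆ {B | 0 < φ B} := fun B hB => by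
    obtain ⟨i, j, k, hAz, hBz⟩ := h B hB
    refine sum_pos' (M := ℝ) (fun x _ => ?_) ⟨(i, j, k), mem_univ _, ?_⟩
    · split_ifs <;> simp [hs B hB]
    · simpa [hAz] using (hs B hB i j k).lt_of_ne' hBz
  have hA0 : φ A = 0 := sum_eq_zero fun x _ => ite_eq_right_iff.mpr id
  exact (show 0 < φ A from convexHull_min hpos (convex_halfSpace_gt hφ 0) hA).ne' hA0

theorem exists_eq_neg_or_eq_sub_one_of_forall_ne (σ τ : Equiv.Perm (Fin 3)) (h : ∀ i, σ i ≠ τ i) :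
    ∃ i, σ i = -i ∨ τ i = i - 1 := by
  revert σ τ; decide

theorem D_apply_neg_zero (i : Fin 3) : D i (-i) 0 = 0 := by
  fin_cases i <;> simp [D]

theorem D_apply_sub_one_one (i : Fin 3) : D i (i - 1) 1 = 0 := by
  fin_cases i <;> simp [D]

theorem exists_D_apply_eq_zero_of_discordant {π : Fin 3 → Equiv.Perm (Fin 3)}
    (hπ : Discordant π) : ∃ k i, D i (π k i) k = 0 := by
  obtain ⟨i, h | h⟩ := exists_eq_neg_or_eq_sub_one_of_forall_ne (π 0) (π 1) (hπ 0 1 (by decide))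
  · exact ⟨0, i, h ▸ D_apply_neg_zero i⟩
  · exact ⟨1, i, h ▸ D_apply_sub_one_one i⟩

theorem lineStochastic_D : LineStochastic D := by
  refine ⟨fun i j k => ?_, fun j k => ?_, fun i k => ?_, fun i j => ?_⟩
  · fin_cases i <;> fin_cases j <;> fin_cases k <;> norm_num [D]
  · fin_cases j <;> fin_cases k <;> simp [D, Fin.sum_univ_three] <;> norm_num
  · fin_cases i <;> fin_cases k <;> simp [D, Fin.sum_univ_three] <;> norm_num
  · fin_cases i <;> fin_cases j <;> simp [D, Fin.sum_univ_three] <;> norm_num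

/-- `D` is line-stochastic with `Per D = 0`, yet `D` is not a convex combination
of `3 × 3 × 3` line-permutation tensors. -/
theorem D_lineStochastic_Per_zero_not_in_convexHull :
    LineStochastic D ∧ Per2 D = 0 ∧
    D ∉ convexHull ℝ {A : Fin 3 → Fin 3 → Fin 3 → ℝ | LinePermutationTensor A} := by
  refine ⟨lineStochastic_D,
    Per2_eq_zero_of_forall_discordant fun π => exists_D_apply_eq_zero_of_discordant, fun hD => ?_⟩
  obtain ⟨P, hP, hPD⟩ := exists_mem_support_subset_of_mem_convexHull (fun P hP => hP.1.1) hD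
  obtain ⟨π, hπ, hπP⟩ := LinePermutationTensor.exists_discordant_eq_one hP
  obtain ⟨k, i, hki⟩ := exists_D_apply_eq_zero_of_discordant hπ
  exact one_ne_zero ((hπP k i).symm.trans (hPD _ _ _ hki))
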